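/- arXiv:1610.07041 — 3 statements merged into one kernel-verified Lean document; each statement's English description precedes it below -/
import Mathlib

section
/- If heap automata A and B over a class of symbolic heaps both satisfy the compositionality property, then the product automaton C with state space Q_A × Q_B, final states F_A × F_B, and transition relation given componentwise also satisfies the compositionality property, and the language accepted by C equals the intersection of the languages of A and B. -/
namespace HeapAutomata

/-- A heap automaton over a class of symbolic heaps `SH` whose number of
predicate calls is given by `calls`. -/
structure HeapAutomaton (SH : Type) (calls : SH → ℕ) : Type 1 where
  Q : Type
  finQ : Finite Q
  Δ : List Q → SH → Q → Prop
  F : Set Q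
  len_eq : ∀ qs φ q, Δ qs φ q → qs.length = calls φ

variable {SH : Type} {calls : SH → ℕ}

/-- The language of a heap automaton: all reduced (predicate-call-free) symbolic
heaps assigned some final state. -/
def Lang (A : HeapAutomaton SH calls) : Set SH :=
  {τ | calls τ = 0 ∧ ∃ q ∈ A.F, A.Δ [] τ q}

/-- The compositionality property of heap automata, relative to the substitution
operation `subst` replacing the predicate calls of a symbolic heap by reduced
symbolic heaps. -/
def Compositional (subst : SH → List SH → SH) (A : HeapAutomaton SH calls) : Prop :=
  ∀ (p : A.Q) (φ : SH) (τs : List SH),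
    (∀ τ ∈ τs, calls τ = 0) → τs.length = calls φ →
    ((∃ qs : List A.Q, A.Δ qs φ p ∧ List.Forall₂ (fun τ q => A.Δ [] τ q) τs qs) ↔
      A.Δ [] (subst φ τs) p)


/-- The product automaton of two heap automata: state space `Q_A × Q_B`,
final states `F_A × F_B`, componentwise transitions. -/
def product (A B : HeapAutomaton SH calls) : HeapAutomaton SH calls where
  Q := A.Q × B.Q
  finQ := by haveI := A.finQ; haveI := B.finQ; infer_instance
  Δ := fun qs φ q => A.Δ (qs.map Prod.fst) φ q.1 ∧ B.Δ (qs.map Prod.snd) φ q.2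
  F := A.F ×ˢ B.F
  len_eq := by
    intro qs φ q h
    simpa using A.len_eq _ _ _ h.1

end HeapAutomata

namespace List

variable {α β γ : Type*} {R : α → β → Prop} {S : α → γ → Prop}

theorem forall₂_and_iff_map_fst_snd {l : List α} {qs : List (β × γ)} :
    Forall₂ (fun a q => R a q.1 ∧ S a q.2) l qs ↔
      Forall₂ R l (qs.map Prod.fst) ∧ Forall₂ S l (qs.map Prod.snd) := by
  induction qs generalizing l with
  | nil => cases l <;> simp
  | cons q qs ih => cases l <;> simp [ih, and_and_and_comm]

/-- Witnesses for the two components can be chosen separately and then zipped. -/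
theorem exists_forall₂_and_iff {l : List α} {P : List β → Prop} {Q : List γ → Prop} :
    (∃ qs : List (β × γ), (P (qs.map Prod.fst) ∧ Q (qs.map Prod.snd)) ∧
        Forall₂ (fun a q => R a q.1 ∧ S a q.2) l qs) ↔
      (∃ xs, P xs ∧ Forall₂ R l xs) ∧ (∃ ys, Q ys ∧ Forall₂ S l ys) := by
  constructor
  · rintro ⟨qs, ⟨hP, hQ⟩, h⟩
    obtain ⟨hR, hS⟩ := forall₂_and_iff_map_fst_snd.1 h
    exact ⟨⟨_, hP, hR⟩, ⟨_, hQ, hS⟩⟩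
  · rintro ⟨⟨xs, hP, hR⟩, ⟨ys, hQ, hS⟩⟩
    have hlen : xs.length = ys.length := hR.length_eq.symm.trans hS.length_eq
    have hfst : (xs.zip ys).map Prod.fst = xs := map_fst_zip hlen.le
    have hsnd : (xs.zip ys).map Prod.snd = ys := map_snd_zip hlen.ge
    refine ⟨xs.zip ys, ?_, forall₂_and_iff_map_fst_snd.2 ?_⟩ <;> rw [hfst, hsnd]
    exacts [⟨hP, hQ⟩, ⟨hR, hS⟩]

end List

namespace HeapAutomata

variable {SH : Type} {calls : SH → ℕ}

theorem Compositional.product {subst : SH → List SH → SH} {A B : HeapAutomaton SH calls}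
    (hA : Compositional subst A) (hB : Compositional subst B) :
    Compositional subst (product A B) := fun p φ τs hred hlen =>
  List.exists_forall₂_and_iff.trans (and_congr (hA p.1 φ τs hred hlen) (hB p.2 φ τs hred hlen))

theorem lang_product (A B : HeapAutomaton SH calls) :
    Lang (product A B) = Lang A ∩ Lang B := by
  ext τ
  simp only [Lang, product, Set.mem_ofPred_eq, Set.mem_inter_iff, Prod.exists,
    List.map_nil]
  constructor
  · rintro ⟨hτ, qa, qb, ⟨hqa, hqb⟩, ha, hb⟩
    exact ⟨⟨hτ, qa, hqa, ha⟩, hτ, qb, hqb, hb⟩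
  · rintro ⟨⟨hτ, qa, hqa, ha⟩, -, qb, hqb, hb⟩
    exact ⟨hτ, qa, qb, ⟨hqa, hqb⟩, ha, hb⟩

/-- if heap automata `A` and `B` are compositional, then the product
automaton is compositional and accepts `L(A) ∩ L(B)`. -/
theorem product_compositional_and_lang_inter
    (subst : SH → List SH → SH) (A B : HeapAutomaton SH calls)
    (hA : Compositional subst A) (hB : Compositional subst B) :
    Compositional subst (product A B) ∧
      Lang (product A B) = Lang A ∩ Lang B :=
  ⟨hA.product hB, lang_product A B⟩

end HeapAutomata
end

section
/- Refinement Theorem: Given a heap automaton A over a class of symbolic heaps and a system of inductive definitions (SID) Φ, one can construct a refined SID Ψ over predicate symbols Pred(Φ) × Q_A ∪ Pred(Φ) — adding for every rule P ⇐ φ of Φ with predicate calls P₁,…,P_m and every transition (q₁…q_m, φ, q₀) ∈ Δ_A a rule (P,q₀) ⇐ φ[Pᵢ ↦ (Pᵢ,qᵢ)], plus a rule P ⇐ (P,q) x⃗ for each final state q — such that for every predicate P of Φ, the set of unfoldings of P with respect to Ψ equals the intersection of the set of unfoldings of P with respect to Φ with the language L(A). -/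
namespace HeapAutomata

variable {SH : Type} {calls : SH → ℕ}

section SID

variable {PS : Type} (calls : SH → ℕ) (subst : SH → List SH → SH)

/-- A system of inductive definitions over predicate symbols `PS`: a rule
`Φ P φ ps` maps the predicate symbol `P` to the body `φ`, whose predicate calls
are labeled (in order) by the predicate symbols `ps`. -/
abbrev SIDa (PS : Type) (SH : Type) := PS → SH → List PS → Prop

/-- Unfoldings of bounded depth. -/
def UnfoldN (Φ : SIDa PS SH) : ℕ → PS → SH → Prop :=
  Nat.rec (fun _ _ => False)
    (fun _ ih p τ => ∃ φ ps τs, Φ p φ ps ∧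
      List.Forall₂ (fun q σ => ih q σ) ps τs ∧ τ = subst φ τs)

/-- `τ` is obtained by (fully) unfolding the predicate `p` via the rules of `Φ`. -/
def UnfoldPred (Φ : SIDa PS SH) (p : PS) (τ : SH) : Prop := ∃ n, UnfoldN subst Φ n p τ

/-- The set of unfoldings of a predicate: the reduced symbolic heaps obtained by
unfolding it. -/
def UnfoldSet (Φ : SIDa PS SH) (p : PS) : Set SH :=
  {τ | calls τ = 0 ∧ UnfoldPred subst Φ p τ}

end SID

/-!
Induction on the unfolding depth shows that the unfoldings of `(P, q)` in the refined SID are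
exactly the unfoldings of `P` in `Φ` to which `A` assigns `q`: a rule for `(P, q)` is a rule of
`Φ` whose calls are annotated by a transition into `q`, and compositionality says that the
unfoldings substituted into those calls admit such an annotation exactly when the resulting heap
is assigned `q`. The rules `P ⇐ (P, q) x⃗` then cut this down to the final states.
-/

theorem _root_.List.Forall₂.forall_mem_right {α β : Type*} {R : α → β → Prop} {P : β → Prop}
    (hRP : ∀ a b, R a b → P b) {l₁ : List α} {l₂ : List β} (h : List.Forall₂ R l₁ l₂) :
    ∀ b ∈ l₂, P b := by
  induction h with
  | nil => simp
  | cons hab _ ih => exact List.forall_mem_cons.2 ⟨hRP _ _ hab, ih⟩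

theorem _root_.List.forall₂_zip_left_iff {α β γ : Type*} {R : α → γ → Prop}
    {S : γ → β → Prop} {l₁ : List α} {l₂ : List β} {l : List γ}
    (hlen : l₁.length = l₂.length) :
    List.Forall₂ (fun ab c => R ab.1 c ∧ S c ab.2) (l₁.zip l₂) l ↔
      List.Forall₂ R l₁ l ∧ List.Forall₂ S l l₂ := by
  induction l₁ generalizing l₂ l with
  | nil =>
    obtain rfl := List.eq_nil_of_length_eq_zero hlen.symm
    simp
  | cons a l₁ ih =>
    obtain _ | ⟨b, l₂⟩ := l₂
    · simp at hlen
    obtain _ | ⟨c, l⟩ := l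
    · simp
    simp only [List.zip_cons_cons, List.forall₂_cons, ih (Nat.succ.inj hlen)]
    tauto

section Unfoldings

variable {PS : Type} {subst : SH → List SH → SH} {Φ : SIDa PS SH}

def WellFormed (calls : SH → ℕ) (Φ : SIDa PS SH) : Prop :=
  ∀ P φ ps, Φ P φ ps → ps.length = calls φ

def PreservesReduced (calls : SH → ℕ) (subst : SH → List SH → SH) : Prop :=
  ∀ φ τs, τs.length = calls φ → (∀ τ ∈ τs, calls τ = 0) → calls (subst φ τs) = 0

theorem unfoldN_calls_eq_zero (hwf : WellFormed calls Φ)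
    (hsubst : PreservesReduced calls subst) :
    ∀ {n p τ}, UnfoldN subst Φ n p τ → calls τ = 0
  | 0, _, _, h => h.elim
  | _ + 1, _, _, ⟨_, _, _, hΦ, hτs, rfl⟩ =>
    hsubst _ _ (hτs.length_eq ▸ hwf _ _ _ hΦ)
      (hτs.forall_mem_right fun _ _ h => unfoldN_calls_eq_zero hwf hsubst h)

theorem Compositional.exists_forall₂_iff_of_unfoldN {A : HeapAutomaton SH calls}
    (hA : Compositional subst A) (hwf : WellFormed calls Φ)
    (hsubst : PreservesReduced calls subst)
    {P : PS} {φ : SH} {ps : List PS} {τs : List SH} {n : ℕ} (q : A.Q) (hΦ : Φ P φ ps)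
    (hτs : List.Forall₂ (fun p σ => UnfoldN subst Φ n p σ) ps τs) :
    (∃ qs : List A.Q, A.Δ qs φ q ∧ List.Forall₂ (fun τ q => A.Δ [] τ q) τs qs) ↔
      A.Δ [] (subst φ τs) q :=
  hA q φ τs (hτs.forall_mem_right fun _ _ h => unfoldN_calls_eq_zero hwf hsubst h)
    (hτs.length_eq ▸ hwf _ _ _ hΦ)

end Unfoldings

section Refinement

variable {PS : Type} {calls : SH → ℕ}

/-- The refined SID of Theorem (Refinement): predicate symbols are
`Pred(Φ) × Q_A ⊕ Pred(Φ)`.  For every rule `P ⇐ φ` of `Φ` with calls labeled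
`ps` and every transition `(qs, φ, q₀) ∈ Δ_A` there is a rule
`(P, q₀) ⇐ φ` with calls labeled by the pairs `(psᵢ, qsᵢ)`; moreover, for every
final state `q` there is a rule `P ⇐ (P, q) x⃗`, whose body is the single
predicate call `callHeap`. -/
def refineSID (Φ : SIDa PS SH) (A : HeapAutomaton SH calls) (callHeap : SH) :
    SIDa (PS × A.Q ⊕ PS) SH := fun head body labels =>
  (∃ P q₀ ps qs, head = Sum.inl (P, q₀) ∧ Φ P body ps ∧ A.Δ qs body q₀ ∧
      ps.length = qs.length ∧ labels = (ps.zip qs).map Sum.inl) ∨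
  (∃ P q, head = Sum.inr P ∧ q ∈ A.F ∧ body = callHeap ∧
      labels = [Sum.inl (P, q)])

variable {subst : SH → List SH → SH} {Φ : SIDa PS SH} {A : HeapAutomaton SH calls}
  {callHeap : SH}

theorem refineSID_inl_iff {P : PS} {q : A.Q} {φ : SH} {labels : List (PS × A.Q ⊕ PS)} :
    refineSID Φ A callHeap (Sum.inl (P, q)) φ labels ↔
      ∃ ps qs, Φ P φ ps ∧ A.Δ qs φ q ∧ ps.length = qs.length ∧
        labels = (ps.zip qs).map Sum.inl := by
  simp [refineSID]

theorem refineSID_inr_iff {P : PS} {φ : SH} {labels : List (PS × A.Q ⊕ PS)} :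
    refineSID Φ A callHeap (Sum.inr P) φ labels ↔
      ∃ q ∈ A.F, φ = callHeap ∧ labels = [Sum.inl (P, q)] := by
  simp [refineSID]

theorem unfoldN_refineSID_inl_iff (hA : Compositional subst A)
    (hwf : WellFormed calls Φ)
    (hsubst : PreservesReduced calls subst)
    (n : ℕ) (P : PS) (q : A.Q) (τ : SH) :
    UnfoldN subst (refineSID Φ A callHeap) n (Sum.inl (P, q)) τ ↔
      UnfoldN subst Φ n P τ ∧ A.Δ [] τ q := by
  induction n generalizing P q τ with
  | zero => exact ⟨False.elim, fun h => h.1.elim⟩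
  | succ n ih =>
    constructor
    · rintro ⟨φ, _, τs, hrule, hτs, rfl⟩
      obtain ⟨ps, qs, hΦ, hΔ, hlen, rfl⟩ := refineSID_inl_iff.1 hrule
      obtain ⟨hps, hqs⟩ := (List.forall₂_zip_left_iff hlen).1
        ((List.forall₂_map_left_iff.1 hτs).imp fun (pq : PS × A.Q) σ => (ih pq.1 pq.2 σ).1)
      exact ⟨⟨φ, ps, τs, hΦ, hps, rfl⟩,
        (hA.exists_forall₂_iff_of_unfoldN hwf hsubst q hΦ hps).1 ⟨qs, hΔ, hqs⟩⟩
    · rintro ⟨⟨φ, ps, τs, hΦ, hps, rfl⟩, hΔτ⟩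
      obtain ⟨qs, hΔ, hqs⟩ := (hA.exists_forall₂_iff_of_unfoldN hwf hsubst q hΦ hps).2 hΔτ
      have hlen : ps.length = qs.length := hps.length_eq.trans hqs.length_eq
      refine ⟨φ, (ps.zip qs).map Sum.inl, τs,
        refineSID_inl_iff.2 ⟨ps, qs, hΦ, hΔ, hlen, rfl⟩, ?_, rfl⟩
      exact List.forall₂_map_left_iff.2 <| ((List.forall₂_zip_left_iff hlen).2 ⟨hps, hqs⟩).imp
        fun (pq : PS × A.Q) σ => (ih pq.1 pq.2 σ).2

theorem unfoldPred_refineSID_inr_iff (hA : Compositional subst A)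
    (hwf : WellFormed calls Φ)
    (hsubst : PreservesReduced calls subst)
    (hcall : ∀ τ, subst callHeap [τ] = τ) (P : PS) (τ : SH) :
    UnfoldPred subst (refineSID Φ A callHeap) (Sum.inr P) τ ↔
      UnfoldPred subst Φ P τ ∧ ∃ q ∈ A.F, A.Δ [] τ q := by
  constructor
  · rintro ⟨_ | n, h⟩
    · exact h.elim
    obtain ⟨φ, _, τs, hrule, hτs, rfl⟩ := h
    obtain ⟨q, hq, rfl, rfl⟩ := refineSID_inr_iff.1 hrule
    obtain ⟨σ, _, hσ, hnil, rfl⟩ := List.forall₂_cons_left_iff.1 hτs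
    obtain rfl := List.forall₂_nil_left_iff.1 hnil
    obtain ⟨hn, hΔ⟩ := (unfoldN_refineSID_inl_iff hA hwf hsubst n P q _).1 hσ
    rw [hcall]
    exact ⟨⟨n, hn⟩, q, hq, hΔ⟩
  · rintro ⟨⟨n, hn⟩, q, hq, hΔ⟩
    exact ⟨n + 1, callHeap, _, [τ], refineSID_inr_iff.2 ⟨q, hq, rfl, rfl⟩,
      .cons ((unfoldN_refineSID_inl_iff hA hwf hsubst n P q τ).2 ⟨hn, hΔ⟩) .nil, (hcall τ).symm⟩

theorem refinement_theorem_general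
    (subst : SH → List SH → SH)
    (Φ : SIDa PS SH) (A : HeapAutomaton SH calls)
    (hA : Compositional subst A)
    (callHeap : SH)
    (hcall₂ : ∀ τ, subst callHeap [τ] = τ)
    (hwf : ∀ P φ ps, Φ P φ ps → ps.length = calls φ)
    (hsubst : ∀ φ τs, τs.length = calls φ → (∀ τ ∈ τs, calls τ = 0) →
      calls (subst φ τs) = 0) :
    ∀ P : PS,
      UnfoldSet calls subst (refineSID Φ A callHeap) (Sum.inr P) =
        UnfoldSet calls subst Φ P ∩ Lang A := by
  intro P
  ext τ
  constructor
  · rintro ⟨hτ, hP⟩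
    obtain ⟨hΦ, hF⟩ := (unfoldPred_refineSID_inr_iff hA hwf hsubst hcall₂ P τ).1 hP
    exact ⟨⟨hτ, hΦ⟩, hτ, hF⟩
  · rintro ⟨⟨hτ, hΦ⟩, -, hF⟩
    exact ⟨hτ, (unfoldPred_refineSID_inr_iff hA hwf hsubst hcall₂ P τ).2 ⟨hΦ, hF⟩⟩

/-- Refinement Theorem: for a compositional heap automaton `A`
and an SID `Φ`, the refined SID `Ψ = refineSID Φ A callHeap` satisfies
`⟦P x⃗⟧_Ψ = ⟦P x⃗⟧_Φ ∩ L(A)` for every predicate symbol `P` of `Φ`. -/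
theorem refinement_theorem
    (subst : SH → List SH → SH)
    (Φ : SIDa PS SH) (A : HeapAutomaton SH calls)
    (hA : Compositional subst A)
    (callHeap : SH)
    (hcall₁ : calls callHeap = 1)
    (hcall₂ : ∀ τ, subst callHeap [τ] = τ)
    (hwf : ∀ P φ ps, Φ P φ ps → ps.length = calls φ)
    (hsubst : ∀ φ τs, τs.length = calls φ → (∀ τ ∈ τs, calls τ = 0) →
      calls (subst φ τs) = 0) :
    ∀ P : PS,
      UnfoldSet calls subst (refineSID Φ A callHeap) (Sum.inr P) =
        UnfoldSet calls subst Φ P ∩ Lang A :=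
  refinement_theorem_general subst Φ A hA callHeap hcall₂ hwf hsubst

end Refinement

end HeapAutomata
end

section
/- Auxiliary refinement lemma: with the refined SID Ψ constructed from SID Φ and a compositional heap automaton A as in the Refinement Theorem, for every predicate symbol P of Φ and every state q of A, a reduced symbolic heap τ is an unfolding of the pair-predicate (P,q) with respect to Ψ if and only if τ is an unfolding of P with respect to Φ and (ε, τ, q) is a transition of A. -/
namespace HeapAutomata

variable {SH : Type} {calls : SH → ℕ}

section Refinement

variable {PS : Type} {calls : SH → ℕ}

lemma forall₂_exists_left {α β : Type*} {R : α → β → Prop} :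
    ∀ {as : List α} {bs : List β}, List.Forall₂ R as bs → ∀ b ∈ bs, ∃ a, R a b := by
  intro as bs h
  induction h with
  | nil => simp
  | cons h _ ih =>
    intro b hb
    rcases List.mem_cons.mp hb with rfl | hb
    · exact ⟨_, h⟩
    · exact ih b hb

lemma forall₂_zip_split {α β γ : Type*} {R : α → γ → Prop} {S : γ → β → Prop} :
    ∀ {ps : List α} {qs : List β} {τs : List γ}, ps.length = qs.length →
      List.Forall₂ (fun pq τ => R pq.1 τ ∧ S τ pq.2) (ps.zip qs) τs →
      List.Forall₂ R ps τs ∧ List.Forall₂ S τs qs := by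
  intro ps
  induction ps with
  | nil =>
    intro qs τs hlen h
    obtain rfl : qs = [] := List.length_eq_zero_iff.mp hlen.symm
    simp only [List.zip_nil_left] at h
    cases h
    exact ⟨List.Forall₂.nil, List.Forall₂.nil⟩
  | cons p ps ih =>
    intro qs τs hlen h
    cases qs with
    | nil => simp at hlen
    | cons q qs =>
      simp only [List.zip_cons_cons] at h
      cases h with
      | cons h₁ h₂ =>
        obtain ⟨hR, hS⟩ := ih (by simpa using hlen) h₂
        exact ⟨List.Forall₂.cons h₁.1 hR, List.Forall₂.cons h₁.2 hS⟩

lemma forall₂_zip_join {α β γ : Type*} {R : α → γ → Prop} {S : γ → β → Prop} :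
    ∀ {ps : List α} {qs : List β} {τs : List γ},
      List.Forall₂ R ps τs → List.Forall₂ S τs qs →
      List.Forall₂ (fun pq τ => R pq.1 τ ∧ S τ pq.2) (ps.zip qs) τs := by
  intro ps qs τs h
  induction h generalizing qs with
  | nil =>
    intro h'
    cases h'
    exact List.Forall₂.nil
  | cons h₁ _ ih =>
    intro h'
    cases h' with
    | cons h₂ h₃ => exact List.Forall₂.cons ⟨h₁, h₂⟩ (ih h₃)

lemma unfoldN_reduced {PS' : Type} (subst : SH → List SH → SH) (Ψ : SIDa PS' SH)
    (hwf : ∀ p φ ps, Ψ p φ ps → ps.length = calls φ)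
    (hsubst : ∀ φ τs, τs.length = calls φ → (∀ τ ∈ τs, calls τ = 0) →
      calls (subst φ τs) = 0) :
    ∀ n p τ, UnfoldN subst Ψ n p τ → calls τ = 0 := by
  intro n
  induction n with
  | zero => intro p τ h; exact h.elim
  | succ m ih =>
    rintro p τ ⟨φ, ps, τs, hrule, hF, rfl⟩
    refine hsubst φ τs ?_ ?_
    · rw [← hF.length_eq]; exact hwf _ _ _ hrule
    · intro σ hσ
      obtain ⟨a, ha⟩ := forall₂_exists_left hF σ hσ
      exact ih a σ ha

/-- auxiliary refinement lemma: for every predicate symbol `P` of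
`Φ` and every state `q` of the compositional heap automaton `A`, a reduced
symbolic heap `τ` is an unfolding of the pair-predicate `(P, q)` with respect to
the refined SID if and only if `τ` is an unfolding of `P` with respect to `Φ`
and `(ε, τ, q)` is a transition of `A`. -/
theorem refinement_aux
    (subst : SH → List SH → SH)
    (Φ : SIDa PS SH) (A : HeapAutomaton SH calls)
    (hA : Compositional subst A)
    (callHeap : SH)
    (hcall₁ : calls callHeap = 1)
    (hcall₂ : ∀ τ, subst callHeap [τ] = τ)
    (hwf : ∀ P φ ps, Φ P φ ps → ps.length = calls φ)
    (hsubst : ∀ φ τs, τs.length = calls φ → (∀ τ ∈ τs, calls τ = 0) →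
      calls (subst φ τs) = 0) :
    ∀ (P : PS) (q : A.Q) (τ : SH), calls τ = 0 →
      (UnfoldPred subst (refineSID Φ A callHeap) (Sum.inl (P, q)) τ ↔
        UnfoldPred subst Φ P τ ∧ A.Δ [] τ q) := by
  have hwfΨ : ∀ p φ ps, refineSID Φ A callHeap p φ ps → ps.length = calls φ := by
    rintro p φ ps (⟨P, q₀, ps', qs, rfl, hΦ, hΔ, hlen, rfl⟩ | ⟨P, q, rfl, _, rfl, rfl⟩)
    · simp only [List.length_map, List.length_zip, hlen, min_self]
      rw [← hlen]; exact hwf _ _ _ hΦ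
    · simpa using hcall₁.symm
  have redΨ := unfoldN_reduced subst (refineSID Φ A callHeap) hwfΨ hsubst
  have redΦ := unfoldN_reduced subst Φ hwf hsubst
  have fwd : ∀ n (P : PS) (q : A.Q) (τ : SH),
      UnfoldN subst (refineSID Φ A callHeap) n (Sum.inl (P, q)) τ →
      UnfoldN subst Φ n P τ ∧ A.Δ [] τ q := by
    intro n
    induction n with
    | zero => intro P q τ h; exact h.elim
    | succ m ih =>
      rintro P q τ ⟨φ, labels, τs, hrule, hF, rfl⟩
      rcases hrule with ⟨P', q₀, ps, qs, heq, hΦ, hΔ, hlen, rfl⟩ |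
        ⟨P', q', heq, _, _, _⟩
      · obtain ⟨h1, h2⟩ : P = P' ∧ q = q₀ := by
          have := heq
          simp only [Sum.inl.injEq, Prod.mk.injEq] at this
          exact ⟨this.1, this.2⟩
        rw [← h1] at hΦ
        rw [← h2] at hΔ
        rw [List.forall₂_map_left_iff] at hF
        have hF' : List.Forall₂ (fun (pq : PS × A.Q) σ =>
            UnfoldN subst Φ m pq.1 σ ∧ A.Δ [] σ pq.2) (ps.zip qs) τs :=
          hF.imp (fun {pq σ} h => ih pq.1 pq.2 σ h)
        obtain ⟨hFΦ, hFΔ⟩ := forall₂_zip_split hlen hF'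
        have hlenτ : τs.length = calls φ := by
          rw [← hFΦ.length_eq]; exact hwf _ _ _ hΦ
        have hred : ∀ σ ∈ τs, calls σ = 0 := by
          intro σ hσ
          obtain ⟨a, ha⟩ := forall₂_exists_left hFΦ σ hσ
          exact redΦ m a σ ha
        refine ⟨⟨φ, ps, τs, hΦ, hFΦ, rfl⟩, ?_⟩
        exact (hA q φ τs hred hlenτ).mp ⟨qs, hΔ, hFΔ⟩
      · exact absurd heq (by simp)
  have bwd : ∀ n (P : PS) (q : A.Q) (τ : SH),
      UnfoldN subst Φ n P τ → A.Δ [] τ q →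
      UnfoldN subst (refineSID Φ A callHeap) n (Sum.inl (P, q)) τ := by
    intro n
    induction n with
    | zero => intro P q τ h; exact h.elim
    | succ m ih =>
      rintro P q τ ⟨φ, ps, τs, hΦ, hF, rfl⟩ hΔ
      have hlenτ : τs.length = calls φ := by
        rw [← hF.length_eq]; exact hwf _ _ _ hΦ
      have hred : ∀ σ ∈ τs, calls σ = 0 := by
        intro σ hσ
        obtain ⟨a, ha⟩ := forall₂_exists_left hF σ hσ
        exact redΦ m a σ ha
      obtain ⟨qs, hΔqs, hFΔ⟩ := (hA q φ τs hred hlenτ).mpr hΔ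
      refine ⟨φ, (ps.zip qs).map Sum.inl, τs,
        Or.inl ⟨P, q, ps, qs, rfl, hΦ, hΔqs, ?_, rfl⟩, ?_, rfl⟩
      · rw [hF.length_eq, hFΔ.length_eq]
      · rw [List.forall₂_map_left_iff]
        exact (forall₂_zip_join hF hFΔ).imp
          (fun {pq σ} h => ih pq.1 pq.2 σ h.1 h.2)
  intro P q τ _
  constructor
  · rintro ⟨n, h⟩
    obtain ⟨h₁, h₂⟩ := fwd n P q τ h
    exact ⟨⟨n, h₁⟩, h₂⟩
  · rintro ⟨⟨n, h₁⟩, h₂⟩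
    exact ⟨n, bwd n P q τ h₁ h₂⟩

end Refinement

end HeapAutomata
end
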